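/- For the binary search tree source σ_bst(i, n−i) = 1/(n−1) for 1 ≤ i ≤ n−1, and for any N ≥ 2, the function ϑ_bst(x) = x^{2eN/(N−1)} satisfies: ϑ_bst' is increasing on [1,∞), ϑ_bst'(1) ≥ 1, and (2e/(x−1))·ϑ_bst(x) ≤ ϑ_bst'(x) for all x ≥ N. Consequently E(H_{n,σ_bst}) ≤ (2e·N/(N−1) − 1)·ln(n)·(1+o(1)), and hence E(H_{n,σ_bst}) ≤ c·ln(n)·(1+o(1)) for every constant c > 2e − 1. -/
import Mathlib


inductive BTree
  | leaf : BTree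
  | node : BTree → BTree → BTree
deriving DecidableEq

def BTree.size : BTree → ℕ
  | .leaf => 1
  | .node l r => l.size + r.size

def BTree.height : BTree → ℕ
  | .leaf => 0
  | .node l r => 1 + max l.height r.height

noncomputable def Pσ (σ : ℕ → ℕ → ℝ) : BTree → ℝ
  | .leaf => 1
  | .node l r => σ l.size r.size * Pσ σ l * Pσ σ r

def trees : ℕ → Finset BTree
  | 0 => ∅
  | 1 => {BTree.leaf}
  | (n+2) => (Finset.Ico 1 (n+2)).attach.biUnion
      (fun k => ((trees k.1) ×ˢ (trees (n+2-k.1))).image (fun p => BTree.node p.1 p.2))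
  decreasing_by
  · exact (Finset.mem_Ico.mp k.2).2
  · have h := (Finset.mem_Ico.mp k.2).1; omega

noncomputable def expPow (σ : ℕ → ℕ → ℝ) (φ : ℝ) (n : ℕ) : ℝ :=
  ∑ t ∈ trees n, Pσ σ t * φ ^ t.height

noncomputable def expH (σ : ℕ → ℕ → ℝ) (n : ℕ) : ℝ :=
  ∑ t ∈ trees n, Pσ σ t * (t.height : ℝ)

open Filter Asymptotics Real

/-- The binary search tree source: σ_bst(i, j) = 1/(i+j−1). -/
noncomputable def σbst (i j : ℕ) : ℝ := 1 / ((i : ℝ) + (j : ℝ) - 1)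

lemma trees_two (n : ℕ) : trees (n+2) = (Finset.Ico 1 (n+2)).attach.biUnion
      (fun k => ((trees k.1) ×ˢ (trees (n+2-k.1))).image (fun p => BTree.node p.1 p.2)) := by
  rw [trees]

lemma size_pos (t : BTree) : 1 ≤ t.size := by
  induction t with
  | leaf => simp [BTree.size]
  | node l r hl hr => simp [BTree.size]; omega

lemma size_mem : ∀ (t : BTree) (n : ℕ), t ∈ trees n → t.size = n := by
  intro t
  induction t with
  | leaf =>
    intro n hn
    match n with
    | 0 => simp [trees] at hn
    | 1 => simp [BTree.size]
    | (m+2) =>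
      rw [trees_two] at hn
      simp only [Finset.mem_biUnion, Finset.mem_image, Finset.mem_product] at hn
      obtain ⟨k, _, ⟨p, _, hp⟩⟩ := hn
      exact absurd hp (by simp)
  | node l r hl hr =>
    intro n hn
    match n with
    | 0 => simp [trees] at hn
    | 1 => simp [trees] at hn
    | (m+2) =>
      rw [trees_two] at hn
      simp only [Finset.mem_biUnion, Finset.mem_image, Finset.mem_product] at hn
      obtain ⟨k, _, ⟨p, ⟨hp1, hp2⟩, hp⟩⟩ := hn
      simp only [BTree.node.injEq] at hp
      obtain ⟨rfl, rfl⟩ := hp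
      have h1 := hl _ hp1
      have h2 := hr _ hp2
      have hk := Finset.mem_Ico.mp k.2
      simp only [BTree.size, h1, h2]
      omega

lemma sum_trees (n : ℕ) (F : BTree → ℝ) :
    ∑ t ∈ trees (n+2), F t
      = ∑ k ∈ Finset.Ico 1 (n+2), ∑ l ∈ trees k, ∑ r ∈ trees (n+2-k), F (BTree.node l r) := by
  rw [trees_two, Finset.sum_biUnion]
  · rw [← Finset.sum_attach (Finset.Ico 1 (n+2))
      (fun k => ∑ l ∈ trees k, ∑ r ∈ trees (n+2-k), F (BTree.node l r))]
    refine Finset.sum_congr rfl (fun k _ => ?_)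
    rw [Finset.sum_image, Finset.sum_product]
    intro p hp q hq h
    simp only [BTree.node.injEq] at h
    exact Prod.ext h.1 h.2
  · intro a _ b _ hab
    simp only [Function.onFun, Finset.disjoint_left]
    intro t ht ht'
    simp only [Finset.mem_image, Finset.mem_product] at ht ht'
    obtain ⟨p, ⟨hp1, _⟩, rfl⟩ := ht
    obtain ⟨q, ⟨hq1, _⟩, hq⟩ := ht'
    simp only [BTree.node.injEq] at hq
    have h1 := size_mem _ _ hp1
    have h2 := size_mem _ _ hq1
    rw [hq.1] at h2
    exact hab (Subtype.ext (h1.symm.trans h2))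

lemma Pσ_nonneg (t : BTree) : 0 ≤ Pσ σbst t := by
  induction t with
  | leaf => simp [Pσ]
  | node l r hl hr =>
    have h1 := size_pos l
    have h2 := size_pos r
    have : (0:ℝ) ≤ σbst l.size r.size := by
      unfold σbst
      have : (1:ℝ) ≤ (l.size : ℝ) + (r.size : ℝ) - 1 := by
        have : (2:ℝ) ≤ (l.size : ℝ) + (r.size : ℝ) := by
          push_cast; exact_mod_cast by omega
        linarith
      positivity
    simp only [Pσ]
    positivity

lemma sum_Pσ : ∀ n, 1 ≤ n → ∑ t ∈ trees n, Pσ σbst t = 1 := by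
  intro n
  induction n using Nat.strong_induction_on with
  | _ n ih =>
    intro hn
    match n with
    | 1 => simp [trees, Pσ]
    | (m+2) =>
      rw [sum_trees]
      have : ∀ k ∈ Finset.Ico 1 (m+2),
          (∑ l ∈ trees k, ∑ r ∈ trees (m+2-k), Pσ σbst (BTree.node l r))
            = 1/((m:ℝ)+1) := by
        intro k hk
        have hk' := Finset.mem_Ico.mp hk
        have e1 : ∑ l ∈ trees k, ∑ r ∈ trees (m+2-k), Pσ σbst (BTree.node l r)
            = ∑ l ∈ trees k, ∑ r ∈ trees (m+2-k), (1/((m:ℝ)+1)) * (Pσ σbst l * Pσ σbst r) := by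
          refine Finset.sum_congr rfl (fun l hl => Finset.sum_congr rfl (fun r hr => ?_))
          have hsl := size_mem _ _ hl
          have hsr := size_mem _ _ hr
          simp only [Pσ, σbst, hsl, hsr]
          have : ((k:ℝ) + ((m+2-k : ℕ):ℝ) - 1) = (m:ℝ)+1 := by
            have : (m+2-k : ℕ) = m+2-k := rfl
            push_cast [Nat.cast_sub (le_of_lt hk'.2)]
            ring
          rw [this]; ring
        rw [e1]
        simp_rw [← Finset.mul_sum, ← Finset.sum_mul]
        rw [ih k (by omega) (by omega), ih (m+2-k) (by omega) (by omega)]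
        ring
      rw [Finset.sum_congr rfl this]
      simp [Nat.card_Ico]
      field_simp

lemma cube_sum : ∀ n : ℕ, ∑ k ∈ Finset.Ico 1 n, (k:ℝ)^3 = ((n:ℝ)^2 * ((n:ℝ)-1)^2)/4 := by
  intro n
  induction n with
  | zero => simp
  | succ m ih =>
    match m with
    | 0 => simp
    | (m+1) =>
      rw [Finset.sum_Ico_succ_top (by omega), ih]
      push_cast
      ring

lemma reflect_cube (n : ℕ) :
    ∑ k ∈ Finset.Ico 1 n, ((n - k : ℕ):ℝ)^3 = ∑ k ∈ Finset.Ico 1 n, (k:ℝ)^3 := by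
  refine Finset.sum_nbij' (fun k => n - k) (fun k => n - k) ?_ ?_ ?_ ?_ ?_ <;>
    (intro a ha; simp only [Finset.mem_Ico] at *) <;> omega

lemma expPow_le : ∀ n, 1 ≤ n → expPow σbst 2 n ≤ (n:ℝ)^3 := by
  intro n
  induction n using Nat.strong_induction_on with
  | _ n ih =>
    intro hn
    match n with
    | 1 => simp [expPow, trees, Pσ, BTree.height]
    | (m+2) =>
      unfold expPow
      rw [sum_trees]
      have key : ∀ k ∈ Finset.Ico 1 (m+2),
          (∑ l ∈ trees k, ∑ r ∈ trees (m+2-k),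
            Pσ σbst (BTree.node l r) * (2:ℝ) ^ (BTree.node l r).height)
          ≤ (2/((m:ℝ)+1)) * ((k:ℝ)^3 + ((m+2-k : ℕ):ℝ)^3) := by
        intro k hk
        have hk' := Finset.mem_Ico.mp hk
        have step1 : ∀ l ∈ trees k, ∀ r ∈ trees (m+2-k),
            Pσ σbst (BTree.node l r) * (2:ℝ) ^ (BTree.node l r).height
            ≤ (2/((m:ℝ)+1)) * ((Pσ σbst l * 2^l.height) * Pσ σbst r
                + Pσ σbst l * (Pσ σbst r * 2^r.height)) := by
          intro l hl r hr
          have hsl := size_mem _ _ hl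
          have hsr := size_mem _ _ hr
          have hσ : σbst l.size r.size = 1/((m:ℝ)+1) := by
            simp only [σbst, hsl, hsr]
            congr 1
            push_cast [Nat.cast_sub (le_of_lt hk'.2)]
            ring
          have hpow : (2:ℝ) ^ (BTree.node l r).height
              ≤ 2 * ((2:ℝ)^l.height + 2^r.height) := by
            simp only [BTree.height, pow_add, pow_one]
            rcases max_cases l.height r.height with ⟨h, _⟩ | ⟨h, _⟩ <;> rw [h] <;>
              nlinarith [pow_pos (by norm_num : (0:ℝ) < 2) l.height,
                pow_pos (by norm_num : (0:ℝ) < 2) r.height]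
          have hpl := Pσ_nonneg l
          have hpr := Pσ_nonneg r
          simp only [Pσ, hσ]
          have hm : (0:ℝ) < (m:ℝ)+1 := by positivity
          calc 1/((m:ℝ)+1) * Pσ σbst l * Pσ σbst r * (2:ℝ) ^ (BTree.node l r).height
              ≤ 1/((m:ℝ)+1) * Pσ σbst l * Pσ σbst r * (2 * ((2:ℝ)^l.height + 2^r.height)) := by
                apply mul_le_mul_of_nonneg_left hpow; positivity
            _ = (2/((m:ℝ)+1)) * ((Pσ σbst l * 2^l.height) * Pσ σbst r
                + Pσ σbst l * (Pσ σbst r * 2^r.height)) := by ring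
        calc (∑ l ∈ trees k, ∑ r ∈ trees (m+2-k),
              Pσ σbst (BTree.node l r) * (2:ℝ) ^ (BTree.node l r).height)
            ≤ ∑ l ∈ trees k, ∑ r ∈ trees (m+2-k),
              (2/((m:ℝ)+1)) * ((Pσ σbst l * 2^l.height) * Pσ σbst r
                + Pσ σbst l * (Pσ σbst r * 2^r.height)) := by
              refine Finset.sum_le_sum (fun l hl => Finset.sum_le_sum (fun r hr => ?_))
              exact step1 l hl r hr
          _ = (2/((m:ℝ)+1)) * (expPow σbst 2 k * (∑ r ∈ trees (m+2-k), Pσ σbst r)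
                + (∑ l ∈ trees k, Pσ σbst l) * expPow σbst 2 (m+2-k)) := by
              rw [expPow, expPow, Finset.sum_mul_sum, Finset.sum_mul_sum,
                ← Finset.sum_add_distrib, Finset.mul_sum]
              refine Finset.sum_congr rfl fun l _ => ?_
              rw [← Finset.sum_add_distrib, Finset.mul_sum]
          _ ≤ (2/((m:ℝ)+1)) * ((k:ℝ)^3 + ((m+2-k : ℕ):ℝ)^3) := by
              rw [sum_Pσ (m+2-k) (by omega), sum_Pσ k (by omega)]
              have h1 := ih k (by omega) (by omega)
              have h2 := ih (m+2-k) (by omega) (by omega)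
              have : (0:ℝ) < 2/((m:ℝ)+1) := by positivity
              nlinarith
      calc (∑ k ∈ Finset.Ico 1 (m+2), ∑ l ∈ trees k, ∑ r ∈ trees (m+2-k),
            Pσ σbst (BTree.node l r) * (2:ℝ) ^ (BTree.node l r).height)
          ≤ ∑ k ∈ Finset.Ico 1 (m+2), (2/((m:ℝ)+1)) * ((k:ℝ)^3 + ((m+2-k : ℕ):ℝ)^3) :=
            Finset.sum_le_sum key
        _ = (2/((m:ℝ)+1)) * (∑ k ∈ Finset.Ico 1 (m+2), (k:ℝ)^3
              + ∑ k ∈ Finset.Ico 1 (m+2), ((m+2-k : ℕ):ℝ)^3) := by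
            rw [← Finset.mul_sum, Finset.sum_add_distrib]
        _ = (2/((m:ℝ)+1)) * (2 * ((((m:ℝ)+2)^2 * (((m:ℝ)+2)-1)^2)/4)) := by
            rw [reflect_cube (m+2), cube_sum (m+2)]
            push_cast
            ring
        _ ≤ ((m:ℝ)+2)^3 := by
            have hm : (0:ℝ) < (m:ℝ)+1 := by positivity
            rw [div_mul_eq_mul_div, div_le_iff₀ hm]
            nlinarith [sq_nonneg ((m:ℝ)+2)]
        _ = (((m+2 : ℕ)):ℝ)^3 := by push_cast; ring

lemma expH_le (n : ℕ) (hn : 1 ≤ n) :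
    expH σbst n ≤ (3 / Real.log 2) * Real.log n := by
  have hlog2 : (0:ℝ) < Real.log 2 := Real.log_pos (by norm_num)
  have hJ : Real.exp (Real.log 2 * expH σbst n) ≤ expPow σbst 2 n := by
    have h := convexOn_exp.map_sum_le (t := trees n) (w := fun t => Pσ σbst t)
      (p := fun t => Real.log 2 * (t.height : ℝ))
      (fun t _ => Pσ_nonneg t) (sum_Pσ n hn) (fun t _ => Set.mem_univ _)
    have e1 : (∑ t ∈ trees n, Pσ σbst t • (Real.log 2 * (t.height : ℝ)))
        = Real.log 2 * expH σbst n := by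
      rw [expH, Finset.mul_sum]
      exact Finset.sum_congr rfl fun t _ => by simp [smul_eq_mul]; ring
    have e2 : (∑ t ∈ trees n, Pσ σbst t • Real.exp (Real.log 2 * (t.height : ℝ)))
        = expPow σbst 2 n := by
      rw [expPow]
      refine Finset.sum_congr rfl fun t _ => ?_
      rw [smul_eq_mul, mul_comm (Real.log 2), Real.exp_nat_mul, Real.exp_log (by norm_num)]
    rw [e1] at h; rw [e2] at h; exact h
  have hZ : expPow σbst 2 n ≤ (n:ℝ)^3 := expPow_le n hn
  have hn3 : (0:ℝ) < (n:ℝ)^3 := by positivity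
  have : Real.log 2 * expH σbst n ≤ Real.log ((n:ℝ)^3) :=
    (Real.le_log_iff_exp_le hn3).mpr (hJ.trans hZ)
  rw [Real.log_pow] at this
  rw [div_mul_eq_mul_div, le_div_iff₀ hlog2]
  push_cast at this
  linarith

lemma numeric : 3 / Real.log 2 ≤ 2 * Real.exp 1 - 1 := by
  have h2 : Real.log 2 > 0.6931471803 := Real.log_two_gt_d9
  have he : Real.exp 1 > 2.7182818283 := Real.exp_one_gt_d9
  rw [div_le_iff₀ (by linarith : (0:ℝ) < Real.log 2)]
  nlinarith

theorem bst_height_upper_bound :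
    (∀ N : ℕ, 2 ≤ N →
      (let e := Real.exp 1
       let ϑ : ℝ → ℝ := fun x => x ^ (2 * e * N / ((N : ℝ) - 1))
       let ϑ' : ℝ → ℝ := fun x => (2 * e * N / ((N : ℝ) - 1)) * x ^ (2 * e * N / ((N : ℝ) - 1) - 1)
       (∀ x : ℝ, 0 < x → HasDerivAt ϑ (ϑ' x) x) ∧
       MonotoneOn ϑ' (Set.Ici (1 : ℝ)) ∧
       1 ≤ ϑ' 1 ∧
       (∀ x : ℝ, (N : ℝ) ≤ x → (2 * e / (x - 1)) * ϑ x ≤ ϑ' x)) ∧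
      (∃ g : ℕ → ℝ, g =o[atTop] (fun _ => (1 : ℝ)) ∧
        ∀ᶠ n : ℕ in atTop,
          expH σbst n ≤ (2 * Real.exp 1 * N / ((N : ℝ) - 1) - 1) * Real.log n * (1 + g n))) ∧
    (∀ c : ℝ, 2 * Real.exp 1 - 1 < c →
      ∃ g : ℕ → ℝ, g =o[atTop] (fun _ => (1 : ℝ)) ∧
        ∀ᶠ n : ℕ in atTop,
          expH σbst n ≤ c * Real.log n * (1 + g n)) := by
  have he : (2:ℝ) ≤ Real.exp 1 := by nlinarith [Real.add_one_le_exp (1:ℝ)]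
  have hlog2 : (0:ℝ) < Real.log 2 := Real.log_pos (by norm_num)
  constructor
  · intro N hN
    have hN2 : (2:ℝ) ≤ (N:ℝ) := by exact_mod_cast hN
    have hN0 : (0:ℝ) < (N:ℝ) - 1 := by linarith
    set a : ℝ := 2 * Real.exp 1 * N / ((N:ℝ) - 1) with ha
    have haN : 2 * Real.exp 1 ≤ a := by
      rw [ha, le_div_iff₀ hN0]
      nlinarith
    have ha1 : (1:ℝ) ≤ a := by linarith
    constructor
    · refine ⟨?_, ?_, ?_, ?_⟩
      · intro x hx
        exact Real.hasDerivAt_rpow_const (Or.inl (ne_of_gt hx))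
      · intro x hx y hy hxy
        show a * x ^ (a-1) ≤ a * y ^ (a-1)
        refine mul_le_mul_of_nonneg_left ?_ (by linarith)
        exact Real.rpow_le_rpow (le_trans zero_le_one hx) hxy (by linarith)
      · show (1:ℝ) ≤ a * (1:ℝ) ^ (a - 1)
        rw [Real.one_rpow, mul_one]
        exact ha1
      · intro x hx
        have hx1 : (1:ℝ) ≤ x - 1 := by linarith
        have hx0 : (0:ℝ) < x := by linarith
        show 2 * Real.exp 1 / (x - 1) * x ^ a ≤ a * x ^ (a - 1)
        have hsplit : x ^ a = x * x ^ (a - 1) := by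
          nth_rewrite 1 [show a = 1 + (a - 1) by ring]
          rw [Real.rpow_add hx0, Real.rpow_one]
        rw [hsplit]
        have hrp : (0:ℝ) ≤ x ^ (a - 1) := Real.rpow_nonneg (le_of_lt hx0) _
        have key : 2 * Real.exp 1 / (x - 1) * x ≤ a := by
          rw [div_mul_eq_mul_div, div_le_iff₀ (by linarith : (0:ℝ) < x - 1), ha,
            div_mul_eq_mul_div, le_div_iff₀ hN0]
          have hexp : (0:ℝ) < Real.exp 1 := Real.exp_pos 1
          nlinarith
        calc 2 * Real.exp 1 / (x - 1) * (x * x ^ (a-1))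
            = (2 * Real.exp 1 / (x - 1) * x) * x ^ (a-1) := by ring
          _ ≤ a * x ^ (a-1) := mul_le_mul_of_nonneg_right key hrp
    · refine ⟨fun _ => 0, isLittleO_zero _ _, ?_⟩
      filter_upwards [eventually_ge_atTop 1] with n hn
      have h1 := expH_le n hn
      have hlogn : 0 ≤ Real.log n := Real.log_nonneg (by exact_mod_cast hn)
      have h2 : 3 / Real.log 2 ≤ a - 1 := le_trans numeric (by linarith)
      calc expH σbst n ≤ (3 / Real.log 2) * Real.log n := h1
        _ ≤ (a - 1) * Real.log n * (1 + 0) := by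
            rw [add_zero, mul_one]
            exact mul_le_mul_of_nonneg_right h2 hlogn
  · intro c hc
    refine ⟨fun _ => 0, isLittleO_zero _ _, ?_⟩
    filter_upwards [eventually_ge_atTop 1] with n hn
    have h1 := expH_le n hn
    have hlogn : 0 ≤ Real.log n := Real.log_nonneg (by exact_mod_cast hn)
    have h2 : 3 / Real.log 2 ≤ c := le_trans numeric (by linarith)
    calc expH σbst n ≤ (3 / Real.log 2) * Real.log n := h1
      _ ≤ c * Real.log n * (1 + 0) := by
          rw [add_zero, mul_one]
          exact mul_le_mul_of_nonneg_right h2 hlogn
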